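/- Fix n ≥ 1 and set b = ⌊log₂ n⌋ + 2. In ℤ[X₀, …, X_{b−1}], let I′ be the ideal generated by Xᵢ² − (−2·Xᵢ + X_{i+1}) for 0 ≤ i ≤ b−2 together with X_{b−1}². If g is a multilinear polynomial with (2 + X₀)ⁿ − g ∈ I′, then evaluating g at X₀ = X₁ = ⋯ = X_{b−1} = 1 gives ∑_{k=0}^{n} C(n,k)·2^{wt(k)}, the first binomial transform of Gould's sequence (OEIS A368655), where wt(k) is the number of ones in the binary expansion of k. -/
import Mathlib

/-- weight: sum of binary digits -/
lemma wt_add_two_pow (b k : ℕ) (h : k < 2 ^ b) :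
    (Nat.digits 2 (k + 2 ^ b)).sum = (Nat.digits 2 k).sum + 1 := by
  induction b generalizing k with
  | zero =>
    interval_cases k
    simp
  | succ b ih =>
    have hpos : 0 < k + 2 ^ (b + 1) := by positivity
    rw [Nat.digits_def' (by norm_num) hpos]
    have h2 : (k + 2 ^ (b + 1)) % 2 = k % 2 := by
      omega
    have h3 : (k + 2 ^ (b + 1)) / 2 = k / 2 + 2 ^ b := by
      omega
    have h4 : k / 2 < 2 ^ b := by omega
    rw [List.sum_cons, h2, h3, ih _ h4]
    rcases Nat.eq_zero_or_pos k with hk | hk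
    · simp [hk]
    · rw [Nat.digits_def' (b := 2) (by norm_num) hk, List.sum_cons]
      omega

lemma sum_range_two_pow (b : ℕ) : ∑ i ∈ Finset.range b, 2 ^ i = 2 ^ b - 1 := by
  induction b with
  | zero => simp
  | succ b ih =>
    rw [Finset.sum_range_succ, ih]
    have : 1 ≤ 2 ^ b := Nat.one_le_two_pow
    rw [pow_succ]; omega

/-- the linear functional L -/
noncomputable def LL : Polynomial ℤ →ₗ[ℤ] ℤ where
  toFun p := p.sum fun k c => c * 2 ^ (Nat.digits 2 k).sum
  map_add' p q := Polynomial.sum_add_index p q _ (fun _ => by ring) (fun _ _ _ => by ring)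
  map_smul' s p := by
    simp only [smul_eq_mul, RingHom.id_apply]
    rw [Polynomial.sum_smul_index p s _ (fun _ => by ring)]
    rw [Polynomial.sum, Polynomial.sum, Finset.mul_sum]
    exact Finset.sum_congr rfl fun _ _ => by ring

lemma LL_apply (p : Polynomial ℤ) :
    LL p = p.sum fun k c => c * 2 ^ (Nat.digits 2 k).sum := rfl

lemma LL_monomial (k : ℕ) (c : ℤ) :
    LL (Polynomial.monomial k c) = c * 2 ^ (Nat.digits 2 k).sum := by
  rw [LL_apply]
  exact Polynomial.sum_monomial_index c _ (by ring)

lemma LL_C_mul (c : ℤ) (p : Polynomial ℤ) : LL (Polynomial.C c * p) = c * LL p := by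
  rw [← Polynomial.smul_eq_C_mul, map_smul, smul_eq_mul]

lemma LL_shift (b : ℕ) (q : Polynomial ℤ) (hq : q.natDegree < 2 ^ b) :
    LL (Polynomial.X ^ (2 ^ b) * q) = 2 * LL q := by
  conv_lhs => rw [q.as_sum_support]
  conv_rhs => rw [q.as_sum_support]
  rw [Finset.mul_sum, map_sum, map_sum, Finset.mul_sum]
  refine Finset.sum_congr rfl fun k hk => ?_
  have hkb : k < 2 ^ b := lt_of_le_of_lt (Polynomial.le_natDegree_of_mem_supp k hk) hq
  rw [Polynomial.X_pow_eq_monomial, Polynomial.monomial_mul_monomial, one_mul,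
    LL_monomial, LL_monomial, add_comm (2 ^ b) k, wt_add_two_pow b k hkb]
  ring

lemma deg_prod_le (b : ℕ) (S : Finset ℕ) (hS : ∀ j ∈ S, j < b) :
    (∏ i ∈ S, (Polynomial.X ^ (2 ^ i) - 1 : Polynomial ℤ)).natDegree ≤ 2 ^ b - 1 := by
  refine le_trans (Polynomial.natDegree_prod_le S _) ?_
  have h1 : ∀ i ∈ S, (Polynomial.X ^ (2 ^ i) - 1 : Polynomial ℤ).natDegree = 2 ^ i := by
    intro i _
    rw [show (1 : Polynomial ℤ) = Polynomial.C 1 by simp, Polynomial.natDegree_X_pow_sub_C]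
  rw [Finset.sum_congr rfl h1]
  calc ∑ i ∈ S, 2 ^ i ≤ ∑ i ∈ Finset.range b, 2 ^ i :=
        Finset.sum_le_sum_of_subset (fun j hj => Finset.mem_range.mpr (hS j hj))
    _ = 2 ^ b - 1 := sum_range_two_pow b

lemma LL_prod (b : ℕ) (S : Finset ℕ) (hS : ∀ j ∈ S, j < b) :
    LL (∏ i ∈ S, (Polynomial.X ^ (2 ^ i) - 1 : Polynomial ℤ)) = 1 := by
  induction b generalizing S with
  | zero =>
    have hE : S = ∅ := Finset.eq_empty_of_forall_notMem fun j hj => by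
      exact absurd (hS j hj) (by omega)
    subst hE
    rw [Finset.prod_empty, show (1 : Polynomial ℤ) = Polynomial.monomial 0 1 by simp, LL_monomial]
    simp
  | succ b ih =>
    by_cases hb : b ∈ S
    · rw [← Finset.mul_prod_erase S _ hb, sub_one_mul, map_sub]
      have hd : (∏ i ∈ S.erase b, (Polynomial.X ^ (2 ^ i) - 1 : Polynomial ℤ)).natDegree < 2 ^ b := by
        have := deg_prod_le b (S.erase b) (fun j hj => by
          have := hS j (Finset.mem_of_mem_erase hj)
          have := Finset.ne_of_mem_erase hj
          omega)
        have h1 : 1 ≤ 2 ^ b := Nat.one_le_two_pow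
        omega
      rw [LL_shift b _ hd, ih (S.erase b) (fun j hj => by
        have := hS j (Finset.mem_of_mem_erase hj)
        have := Finset.ne_of_mem_erase hj
        omega)]
      ring
    · exact ih S (fun j hj => by have := hS j hj; have : j ≠ b := fun h => hb (h ▸ hj); omega)

open MvPolynomial in
noncomputable def psi (b : ℕ) : MvPolynomial (Fin b) ℤ →+* Polynomial ℤ :=
  MvPolynomial.eval₂Hom Polynomial.C (fun i => Polynomial.X ^ (2 ^ (i : ℕ)) - 1)

lemma psi_X (b : ℕ) (i : Fin b) :
    psi b (MvPolynomial.X i) = Polynomial.X ^ (2 ^ (i : ℕ)) - 1 := by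
  simp [psi]

lemma psi_monomial (b : ℕ) (m : Fin b →₀ ℕ) (c : ℤ) (hm : ∀ i, m i ≤ 1) :
    psi b (MvPolynomial.monomial m c)
      = Polynomial.C c * ∏ j ∈ m.support.image Fin.val, (Polynomial.X ^ (2 ^ j) - 1) := by
  rw [psi, MvPolynomial.eval₂Hom_monomial]
  congr 1
  rw [Finsupp.prod, Finset.prod_image (fun x _ y _ h => Fin.val_injective h)]
  refine Finset.prod_congr rfl fun i hi => ?_
  have h1 : m i = 1 :=
    le_antisymm (hm i) (Nat.one_le_iff_ne_zero.mpr (Finsupp.mem_support_iff.mp hi))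
  rw [h1, pow_one]

lemma LL_psi_monomial (b : ℕ) (m : Fin b →₀ ℕ) (c : ℤ) (hm : ∀ i, m i ≤ 1) :
    LL (psi b (MvPolynomial.monomial m c)) = c := by
  rw [psi_monomial b m c hm, LL_C_mul,
    LL_prod b _ (fun j hj => by
      obtain ⟨i, _, rfl⟩ := Finset.mem_image.mp hj
      exact i.isLt), mul_one]

lemma deg_psi (b : ℕ) (g : MvPolynomial (Fin b) ℤ)
    (hml : ∀ m ∈ g.support, ∀ i : Fin b, m i ≤ 1) :
    (psi b g).natDegree ≤ 2 ^ b - 1 := by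
  conv_lhs => rw [← MvPolynomial.support_sum_monomial_coeff g]
  rw [map_sum]
  refine Polynomial.natDegree_sum_le_of_forall_le _ _ fun m hm => ?_
  rw [psi_monomial b m _ (hml m hm)]
  refine le_trans Polynomial.natDegree_mul_le ?_
  rw [Polynomial.natDegree_C, zero_add]
  exact deg_prod_le b _ (fun j hj => by
    obtain ⟨i, _, rfl⟩ := Finset.mem_image.mp hj
    exact i.isLt)

open MvPolynomial

/-- The generators of the ideal `I′`: `Xᵢ² − (−2Xᵢ + X_{i+1})` for `i ≤ b-2`, and `X_{b-1}²`. -/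
noncomputable def gens' (b : ℕ) : Fin b → MvPolynomial (Fin b) ℤ := fun i =>
  if h : (i : ℕ) + 1 < b then X i ^ 2 - (-2 * X i + X ⟨(i : ℕ) + 1, h⟩) else X i ^ 2

theorem stmt11 (n : ℕ) (hn : 1 ≤ n) (b : ℕ) (hb : b = Nat.log 2 n + 2)
    (g : MvPolynomial (Fin b) ℤ)
    (hml : ∀ m ∈ g.support, ∀ i : Fin b, m i ≤ 1)
    (hg : (2 + X (⟨0, by omega⟩ : Fin b)) ^ n - g ∈ Ideal.span (Set.range (gens' b))) :
    eval (fun _ : Fin b => (1 : ℤ)) g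
      = ∑ k ∈ Finset.range (n + 1), (n.choose k : ℤ) * 2 ^ (Nat.digits 2 k).sum := by
  set f : Polynomial ℤ := (Polynomial.X ^ (2 ^ (b - 1)) - 1) ^ 2 with hf
  -- psi of each generator lies in span {f}
  have hgen : ∀ i : Fin b, psi b (gens' b i) ∈ Ideal.span {f} := by
    intro i
    unfold gens'
    split_ifs with h
    · have hz : psi b (X i ^ 2 - (-2 * X i + X ⟨(i : ℕ) + 1, h⟩)) = 0 := by
        rw [map_sub, map_add, map_mul, map_pow, psi_X, psi_X]
        have h2 : psi b (-2 : MvPolynomial (Fin b) ℤ) = -2 := by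
          rw [map_neg]; norm_num [psi]
        rw [h2]
        have h3 : (2 : ℕ) ^ ((⟨(i : ℕ) + 1, h⟩ : Fin b) : ℕ) = 2 ^ (i : ℕ) * 2 := by
          simp [pow_succ]
        rw [h3, pow_mul]
        ring
      rw [hz]; exact Ideal.zero_mem _
    · have hi : (i : ℕ) = b - 1 := by have := i.isLt; omega
      have hz : psi b (X i ^ 2) = f := by
        rw [map_pow, psi_X, hi, hf]
      rw [hz]
      exact Ideal.mem_span_singleton.mpr dvd_rfl
  -- the image of hg
  have hmem : psi b ((2 + X (⟨0, by omega⟩ : Fin b)) ^ n - g) ∈ Ideal.span {f} := by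
    have h1 := Ideal.mem_map_of_mem (psi b) hg
    rw [Ideal.map_span] at h1
    refine Ideal.span_le.mpr ?_ h1
    rintro _ ⟨_, ⟨i, rfl⟩, rfl⟩
    exact hgen i
  rw [map_sub, map_pow, map_add] at hmem
  have h20 : psi b (2 : MvPolynomial (Fin b) ℤ) = 2 := by norm_num [psi]
  rw [h20, psi_X] at hmem
  have hX1 : (2 + (Polynomial.X ^ (2 ^ ((⟨0, by omega⟩ : Fin b) : ℕ)) - 1) : Polynomial ℤ)
      = Polynomial.X + 1 := by
    norm_num
    ring
  rw [hX1] at hmem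
  have hdvd : f ∣ (Polynomial.X + 1) ^ n - psi b g := Ideal.mem_span_singleton.mp hmem
  -- degree bounds
  have hnb : n < 2 ^ (b - 1) := by
    rw [hb]
    simpa using Nat.lt_pow_succ_log_self (by norm_num) n
  have hb1 : 1 ≤ 2 ^ (b - 1) := Nat.one_le_two_pow
  have hbb : 2 ^ b = 2 * 2 ^ (b - 1) := by
    rw [hb, show Nat.log 2 n + 2 - 1 = Nat.log 2 n + 1 from rfl, pow_succ, pow_succ]
    ring
  have hdX : ((Polynomial.X + 1 : Polynomial ℤ) ^ n).natDegree ≤ n := by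
    refine le_trans Polynomial.natDegree_pow_le ?_
    rw [show (1 : Polynomial ℤ) = Polynomial.C 1 by simp, Polynomial.natDegree_X_add_C]
    omega
  have hdg : (psi b g).natDegree ≤ 2 ^ b - 1 := deg_psi b g hml
  have hfmonic : f.Monic := by
    rw [hf, show (1 : Polynomial ℤ) = Polynomial.C 1 by simp]
    exact (Polynomial.monic_X_pow_sub_C (1 : ℤ) (n := 2 ^ (b - 1)) (by positivity)).pow 2
  have hdf : f.natDegree = 2 ^ b := by
    rw [hf, Polynomial.natDegree_pow,
      show (1 : Polynomial ℤ) = Polynomial.C 1 by simp, Polynomial.natDegree_X_pow_sub_C]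
    omega
  have hdiff : (Polynomial.X + 1 : Polynomial ℤ) ^ n = psi b g := by
    by_contra hne
    have hne0 : (Polynomial.X + 1 : Polynomial ℤ) ^ n - psi b g ≠ 0 := sub_ne_zero.mpr hne
    have := Polynomial.natDegree_le_of_dvd hdvd hne0
    have hd2 : ((Polynomial.X + 1 : Polynomial ℤ) ^ n - psi b g).natDegree ≤ 2 ^ b - 1 := by
      refine le_trans (Polynomial.natDegree_sub_le _ _) ?_
      simp only [sup_le_iff]
      exact ⟨le_trans hdX (by omega), hdg⟩
    omega
  -- evaluate
  have heval : eval (fun _ : Fin b => (1 : ℤ)) g = LL (psi b g) := by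
    conv_lhs => rw [← MvPolynomial.support_sum_monomial_coeff g]
    conv_rhs => rw [← MvPolynomial.support_sum_monomial_coeff g]
    rw [map_sum, map_sum, map_sum]
    refine Finset.sum_congr rfl fun m hm => ?_
    rw [LL_psi_monomial b m _ (hml m hm), MvPolynomial.eval_monomial]
    simp [Finsupp.prod]
  rw [heval, ← hdiff, LL_apply,
    Polynomial.sum_over_range' _ (fun _ => by ring) (n + 1) (lt_of_le_of_lt hdX (by omega))]
  refine Finset.sum_congr rfl fun k _ => ?_
  rw [Polynomial.coeff_X_add_one_pow]
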